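/- For every integer n ≥ 2, consider the 2×2 contingency tables D with entries o₁₁ = 0, o₁₂ = 1, o₂₁ = n − 1, o₂₂ = 0 (total n), and D′ with entries o′₁₁ = 1, o′₁₂ = 1, o′₂₁ = n − 1, o′₂₂ = 0 (total n + 1), where D′ is obtained from D by adding one tuple to cell (1,1). Then χ²(D) = n, χ²(D′) = (n² − 1)/(2n), and hence χ²(D) − χ²(D′) = (n² + 1)/(2n). Consequently the global sensitivity of the χ² correlation statistic of a contingency table with m rows and 2 columns under addition of one tuple is at least (n² + 1)/(2n), where n is the number of tuples. -/

import Mathlib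

open Finset

/-- The Pearson χ² statistic of an `m × k` contingency table `o`:
`χ² = Σ_{i,j} (o_{ij} − e_{ij})² / e_{ij}` with `e_{ij} = R_i·C_j/N`. -/
noncomputable def chiSq {m k : ℕ} (o : Fin m → Fin k → ℝ) : ℝ :=
  ∑ i : Fin m, ∑ j : Fin k,
    (o i j - (∑ j' : Fin k, o i j') * (∑ i' : Fin m, o i' j) /
        (∑ i' : Fin m, ∑ j' : Fin k, o i' j')) ^ 2 /
      ((∑ j' : Fin k, o i j') * (∑ i' : Fin m, o i' j) /
        (∑ i' : Fin m, ∑ j' : Fin k, o i' j'))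

theorem chiSq_two_by_two (a b c d : ℝ) (hR₁ : a + b ≠ 0) (hR₂ : c + d ≠ 0)
    (hC₁ : a + c ≠ 0) (hC₂ : b + d ≠ 0) (hN : a + b + (c + d) ≠ 0) :
    chiSq ![![a, b], ![c, d]] =
      (a + b + (c + d)) * (a * d - b * c) ^ 2 / ((a + b) * (c + d) * (a + c) * (b + d)) := by
  simp only [chiSq, Fin.sum_univ_two, Matrix.cons_val_zero, Matrix.cons_val_one]
  field_simp
  ring

theorem chiSq_sensitivity_lower_bound (n : ℕ) (hn : 2 ≤ n) :
    chiSq (![![(0 : ℝ), 1], ![(n : ℝ) - 1, 0]]) = (n : ℝ) ∧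
    chiSq (![![(1 : ℝ), 1], ![(n : ℝ) - 1, 0]]) = ((n : ℝ) ^ 2 - 1) / (2 * n) ∧
    chiSq (![![(0 : ℝ), 1], ![(n : ℝ) - 1, 0]])
        - chiSq (![![(1 : ℝ), 1], ![(n : ℝ) - 1, 0]]) = ((n : ℝ) ^ 2 + 1) / (2 * n) := by
  have hn' : (2 : ℝ) ≤ n := by exact_mod_cast hn
  have hn₀ : (n : ℝ) ≠ 0 := by linarith
  have hn₁ : (n : ℝ) - 1 ≠ 0 := by linarith
  have hD : chiSq ![![(0 : ℝ), 1], ![(n : ℝ) - 1, 0]] = n := by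
    rw [chiSq_two_by_two] <;> try linarith
    simp only [zero_add, add_zero, one_mul, mul_one]
    field_simp
    ring
  have hD' : chiSq ![![(1 : ℝ), 1], ![(n : ℝ) - 1, 0]] = ((n : ℝ) ^ 2 - 1) / (2 * n) := by
    rw [chiSq_two_by_two] <;> try linarith
    simp only [add_sub_cancel, add_zero, one_mul, mul_one]
    field_simp
    ring
  refine ⟨hD, hD', ?_⟩
  rw [hD, hD']
  field_simp
  ring
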